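/- arXiv:2304.00880 — 2 statements merged into one kernel-verified Lean document; each statement's English description precedes it below -/
import Mathlib

section
/- Let r̃₁, r̃₂ : V' × V → V' × V be the linear maps defined by r̃ᵢ(v', v) = (rᵢ'(v') − rᵢ'(fᵢ(v)), rᵢ(v)). Then r̃₁ and r̃₂ are linear automorphisms of V' × V and they commute: r̃₁ ∘ r̃₂ = r̃₂ ∘ r̃₁. In particular they define a representation of ℤ × ℤ on V' × V in which the two standard generators act by r̃₁ and r̃₂. -/
theorem Commute.exists_monoidHom_multiplicative_int_prod {G : Type*} [Group G] {g h : G}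
    (hc : Commute g h) :
    ∃ ρ : Multiplicative (ℤ × ℤ) →* G,
      ρ (Multiplicative.ofAdd (1, 0)) = g ∧ ρ (Multiplicative.ofAdd (0, 1)) = h :=
  ⟨((zpowersHom G g).noncommCoprod (zpowersHom G h) fun m n => by
      simpa using hc.zpow_zpow m.toAdd n.toAdd).comp
    (MulEquiv.prodMultiplicative (G := ℤ) (H := ℤ)).toMonoidHom, by simp, by simp⟩

namespace LinearEquiv

variable {R M M' : Type*} [Semiring R] [AddCommMonoid M] [AddCommGroup M'] [Module R M]
  [Module R M']

def upperTriangular (a : M' ≃ₗ[R] M') (b : M ≃ₗ[R] M) (g : M →ₗ[R] M') :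
    (M' × M) ≃ₗ[R] (M' × M) :=
  (prodComm R M' M).trans ((b.skewProd a g).trans (prodComm R M M'))

@[simp]
theorem upperTriangular_apply (a : M' ≃ₗ[R] M') (b : M ≃ₗ[R] M) (g : M →ₗ[R] M') (x' : M')
    (x : M) : upperTriangular a b g (x', x) = (a x' + g x, b x) :=
  rfl

theorem commute_upperTriangular {a a' : M' ≃ₗ[R] M'} {b b' : M ≃ₗ[R] M} {g g' : M →ₗ[R] M'}
    (ha : ∀ x', a (a' x') = a' (a x')) (hb : ∀ x, b (b' x) = b' (b x))
    (hg : ∀ x, a (g' x) + g (b' x) = a' (g x) + g' (b x)) :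
    Commute (upperTriangular a b g) (upperTriangular a' b' g') := by
  ext ⟨x', x⟩
  · simp only [mul_apply, upperTriangular_apply, map_add, ha, add_assoc, hg]
  · exact hb x

end LinearEquiv

open LinearEquiv in
theorem stmt0_general (k : Type*) [Field k]
    (V V' : Type*) [AddCommGroup V] [Module k V] [AddCommGroup V'] [Module k V']
    (r₁ r₂ : V ≃ₗ[k] V) (r₁' r₂' : V' ≃ₗ[k] V')
    (hr : ∀ v, r₁ (r₂ v) = r₂ (r₁ v)) (hr' : ∀ v', r₁' (r₂' v') = r₂' (r₁' v'))
    (f₁ f₂ : V →ₗ[k] V')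
    (hf₁ : ∀ v, r₂' (f₁ v) = f₁ (r₂ v)) (hf₂ : ∀ v, r₁' (f₂ v) = f₂ (r₁ v)) :
    ∃ e₁ e₂ : (V' × V) ≃ₗ[k] (V' × V),
      (∀ v' v, e₁ (v', v) = (r₁' v' - r₁' (f₁ v), r₁ v)) ∧
      (∀ v' v, e₂ (v', v) = (r₂' v' - r₂' (f₂ v), r₂ v)) ∧
      (∀ x, e₁ (e₂ x) = e₂ (e₁ x)) ∧
      ∃ ρ : Multiplicative (ℤ × ℤ) →* ((V' × V) ≃ₗ[k] (V' × V)),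
        ρ (Multiplicative.ofAdd (1, 0)) = e₁ ∧ ρ (Multiplicative.ofAdd (0, 1)) = e₂ := by
  have hc : Commute (upperTriangular r₁' r₁ (-(r₁'.toLinearMap ∘ₗ f₁)))
      (upperTriangular r₂' r₂ (-(r₂'.toLinearMap ∘ₗ f₂))) := by
    -- both off-diagonal blocks equal `-r₁' r₂' (f₁ + f₂)`
    refine commute_upperTriangular hr' hr fun v => ?_
    simp only [LinearMap.neg_apply, LinearMap.comp_apply, coe_coe, map_neg, ← hf₁, ← hf₂, hr']
    abel
  refine ⟨_, _, fun v' v => ?_, fun v' v => ?_, fun x => LinearEquiv.congr_fun hc x,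
    hc.exists_monoidHom_multiplicative_int_prod⟩ <;> simp [sub_eq_add_neg]

/-- In the setup of Lemma 3.1 of the paper: the maps
`r̃ᵢ(v', v) = (rᵢ'(v') − rᵢ'(fᵢ(v)), rᵢ(v))` are linear automorphisms of `V' × V`,
they commute, and hence define a representation of `ℤ × ℤ` on `V' × V` in which
the two standard generators act by `r̃₁` and `r̃₂`. -/
theorem stmt0 (k : Type*) [Field k] [CharZero k]
    (V V' : Type*) [AddCommGroup V] [Module k V] [AddCommGroup V'] [Module k V']
    (r₁ r₂ : V ≃ₗ[k] V) (r₁' r₂' : V' ≃ₗ[k] V')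
    (hr : ∀ v, r₁ (r₂ v) = r₂ (r₁ v)) (hr' : ∀ v', r₁' (r₂' v') = r₂' (r₁' v'))
    (f₁ f₂ : V →ₗ[k] V')
    (hf₁ : ∀ v, r₂' (f₁ v) = f₁ (r₂ v)) (hf₂ : ∀ v, r₁' (f₂ v) = f₂ (r₁ v)) :
    ∃ e₁ e₂ : (V' × V) ≃ₗ[k] (V' × V),
      (∀ v' v, e₁ (v', v) = (r₁' v' - r₁' (f₁ v), r₁ v)) ∧
      (∀ v' v, e₂ (v', v) = (r₂' v' - r₂' (f₂ v), r₂ v)) ∧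
      (∀ x, e₁ (e₂ x) = e₂ (e₁ x)) ∧
      ∃ ρ : Multiplicative (ℤ × ℤ) →* ((V' × V) ≃ₗ[k] (V' × V)),
        ρ (Multiplicative.ofAdd (1, 0)) = e₁ ∧ ρ (Multiplicative.ofAdd (0, 1)) = e₂ :=
  stmt0_general k V V' r₁ r₂ r₁' r₂' hr hr' f₁ f₂ hf₁ hf₂
end

section
/- Let V, V' be cochain complexes and for i = 1, 2 let V' →(pᵢ) Vᵢ →(qᵢ) V be extensions: pᵢ and qᵢ are chain maps with qᵢ ∘ pᵢ = 0, equipped with splittings αᵢ ∈ Cochain(Vᵢ, V', 0), βᵢ ∈ Cochain(V, Vᵢ, 0) satisfying αᵢ ∘ βᵢ = 0, αᵢ ∘ pᵢ = id_{V'}, qᵢ ∘ βᵢ = id_V, and pᵢ ∘ αᵢ + βᵢ ∘ qᵢ = id_{Vᵢ}. Suppose the two extensions have the same extension class, i.e. there exists γ ∈ Cochain(V, V', 0) with δγ = α₂ ∘ (δβ₂) − α₁ ∘ (δβ₁). Then φ := p₂ ∘ α₁ + β₂ ∘ q₁ − p₂ ∘ γ ∘ q₁ ∈ Cochain(V₁,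 V₂, 0) is a cocycle (δφ = 0, so φ is a chain map V₁ → V₂) and is an isomorphism of cochain complexes, i.e. there is a chain map ψ : V₂ → V₁ with ψ ∘ φ = id_{V₁} and φ ∘ ψ = id_{V₂}. -/
open CategoryTheory CochainComplex.HomComplex

namespace Stmt9Aux

variable {C : Type*} [Category C] [Preadditive C]

lemma aux_comp_id {F G L : CochainComplex C ℤ} {n : ℤ}
    {a : Cochain F G 0} {b : Cochain G F 0}
    (h : a.comp b (zero_add 0) = Cochain.ofHom (𝟙 F)) (x : Cochain F L n) :
    a.comp (b.comp x (zero_add n)) (zero_add n) = x := by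
  rw [← Cochain.comp_assoc_of_first_is_zero_cochain, h, Cochain.id_comp]

lemma aux_comp_zero {F G K L : CochainComplex C ℤ} {n : ℤ}
    {a : Cochain F G 0} {b : Cochain G K 0}
    (h : a.comp b (zero_add 0) = 0) (x : Cochain K L n) :
    a.comp (b.comp x (zero_add n)) (zero_add n) = 0 := by
  rw [← Cochain.comp_assoc_of_first_is_zero_cochain, h, Cochain.zero_comp]

end Stmt9Aux

open Stmt9Aux

/-- the paper's Lemma 2.1, after Simpson. Two extensions
`V' →(pᵢ) Vᵢ →(qᵢ) V` with splittings `(αᵢ, βᵢ)` having the same extension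
class (i.e. `δγ = α₂∘δβ₂ − α₁∘δβ₁` for some degree-0 cochain `γ`) are
isomorphic, via `φ := p₂∘α₁ + β₂∘q₁ − p₂∘γ∘q₁`: `φ` is a cocycle and there is
a chain map `ψ : V₂ → V₁` with `ψ∘φ = id` and `φ∘ψ = id`.
Here `g ∘ f` means "first `f`, then `g`", i.e. `f.comp g` in Mathlib's
diagrammatic convention. -/
theorem stmt9 (k : Type) [Field k] [CharZero k]
    (V V' V₁ V₂ : CochainComplex (ModuleCat k) ℤ)
    (p₁ : V' ⟶ V₁) (q₁ : V₁ ⟶ V) (hqp₁ : p₁ ≫ q₁ = 0)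
    (p₂ : V' ⟶ V₂) (q₂ : V₂ ⟶ V) (hqp₂ : p₂ ≫ q₂ = 0)
    (α₁ : Cochain V₁ V' 0) (β₁ : Cochain V V₁ 0)
    (α₂ : Cochain V₂ V' 0) (β₂ : Cochain V V₂ 0)
    (hαβ₁ : β₁.comp α₁ (show (0 : ℤ) + 0 = 0 by norm_num) = 0)
    (hαp₁ : (Cochain.ofHom p₁).comp α₁ (show (0 : ℤ) + 0 = 0 by norm_num) =
      Cochain.ofHom (𝟙 V'))
    (hqβ₁ : β₁.comp (Cochain.ofHom q₁) (show (0 : ℤ) + 0 = 0 by norm_num) =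
      Cochain.ofHom (𝟙 V))
    (hsplit₁ : α₁.comp (Cochain.ofHom p₁) (show (0 : ℤ) + 0 = 0 by norm_num)
        + (Cochain.ofHom q₁).comp β₁ (show (0 : ℤ) + 0 = 0 by norm_num) =
      Cochain.ofHom (𝟙 V₁))
    (hαβ₂ : β₂.comp α₂ (show (0 : ℤ) + 0 = 0 by norm_num) = 0)
    (hαp₂ : (Cochain.ofHom p₂).comp α₂ (show (0 : ℤ) + 0 = 0 by norm_num) =
      Cochain.ofHom (𝟙 V'))
    (hqβ₂ : β₂.comp (Cochain.ofHom q₂) (show (0 : ℤ) + 0 = 0 by norm_num) =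
      Cochain.ofHom (𝟙 V))
    (hsplit₂ : α₂.comp (Cochain.ofHom p₂) (show (0 : ℤ) + 0 = 0 by norm_num)
        + (Cochain.ofHom q₂).comp β₂ (show (0 : ℤ) + 0 = 0 by norm_num) =
      Cochain.ofHom (𝟙 V₂))
    (γ : Cochain V V' 0)
    (hγ : δ 0 1 γ =
      (δ 0 1 β₂).comp α₂ (show (1 : ℤ) + 0 = 1 by norm_num)
        - (δ 0 1 β₁).comp α₁ (show (1 : ℤ) + 0 = 1 by norm_num))
    (φ : Cochain V₁ V₂ 0)
    (hφ : φ = α₁.comp (Cochain.ofHom p₂) (show (0 : ℤ) + 0 = 0 by norm_num)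
        + (Cochain.ofHom q₁).comp β₂ (show (0 : ℤ) + 0 = 0 by norm_num)
        - ((Cochain.ofHom q₁).comp γ (show (0 : ℤ) + 0 = 0 by norm_num)).comp
            (Cochain.ofHom p₂) (show (0 : ℤ) + 0 = 0 by norm_num)) :
    δ 0 1 φ = 0 ∧
    ∃ ψ : Cochain V₂ V₁ 0, δ 0 1 ψ = 0 ∧
      φ.comp ψ (show (0 : ℤ) + 0 = 0 by norm_num) = Cochain.ofHom (𝟙 V₁) ∧
      ψ.comp φ (show (0 : ℤ) + 0 = 0 by norm_num) = Cochain.ofHom (𝟙 V₂) := by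
  have hPQ₁ : (Cochain.ofHom p₁).comp (Cochain.ofHom q₁) (zero_add 0) = 0 := by
    rw [← Cochain.ofHom_comp, hqp₁]
    simp
  have hPQ₂ : (Cochain.ofHom p₂).comp (Cochain.ofHom q₂) (zero_add 0) = 0 := by
    rw [← Cochain.ofHom_comp, hqp₂]
    simp
  -- differentiated identities
  have dqβ₁ : (δ 0 1 β₁).comp (Cochain.ofHom q₁) (add_zero 1) = 0 := by
    simpa using congrArg (δ 0 1) hqβ₁
  have dqβ₂ : (δ 0 1 β₂).comp (Cochain.ofHom q₂) (add_zero 1) = 0 := by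
    simpa using congrArg (δ 0 1) hqβ₂
  have dsplit₁ : (δ 0 1 α₁).comp (Cochain.ofHom p₁) (add_zero 1)
      + (Cochain.ofHom q₁).comp (δ 0 1 β₁) (zero_add 1) = 0 := by
    simpa using congrArg (δ 0 1) hsplit₁
  have dsplit₂ : (δ 0 1 α₂).comp (Cochain.ofHom p₂) (add_zero 1)
      + (Cochain.ofHom q₂).comp (δ 0 1 β₂) (zero_add 1) = 0 := by
    simpa using congrArg (δ 0 1) hsplit₂
  have e₁ : (Cochain.ofHom q₁).comp (δ 0 1 β₁) (zero_add 1)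
      = -((δ 0 1 α₁).comp (Cochain.ofHom p₁) (add_zero 1)) := by
    have h := dsplit₁
    rw [add_comm] at h
    exact add_eq_zero_iff_eq_neg.mp h
  have e₂ : (Cochain.ofHom q₂).comp (δ 0 1 β₂) (zero_add 1)
      = -((δ 0 1 α₂).comp (Cochain.ofHom p₂) (add_zero 1)) := by
    have h := dsplit₂
    rw [add_comm] at h
    exact add_eq_zero_iff_eq_neg.mp h
  have f₁ : ((δ 0 1 β₁).comp α₁ (add_zero 1)).comp (Cochain.ofHom p₁) (add_zero 1)
      = δ 0 1 β₁ := by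
    rw [Cochain.comp_assoc_of_second_is_zero_cochain, eq_sub_of_add_eq hsplit₁,
      Cochain.comp_sub, Cochain.comp_id,
      ← Cochain.comp_assoc_of_second_is_zero_cochain, dqβ₁, Cochain.zero_comp, sub_zero]
  have f₂ : ((δ 0 1 β₂).comp α₂ (add_zero 1)).comp (Cochain.ofHom p₂) (add_zero 1)
      = δ 0 1 β₂ := by
    rw [Cochain.comp_assoc_of_second_is_zero_cochain, eq_sub_of_add_eq hsplit₂,
      Cochain.comp_sub, Cochain.comp_id,
      ← Cochain.comp_assoc_of_second_is_zero_cochain, dqβ₂, Cochain.zero_comp, sub_zero]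
  -- cross terms
  have g₁ : ((Cochain.ofHom q₁).comp ((δ 0 1 β₁).comp α₁ (add_zero 1)) (zero_add 1)).comp
      (Cochain.ofHom p₂) (add_zero 1)
      = -((δ 0 1 α₁).comp (Cochain.ofHom p₂) (add_zero 1)) := by
    rw [← Cochain.comp_assoc_of_first_is_zero_cochain, e₁, Cochain.neg_comp, Cochain.neg_comp,
      Cochain.comp_assoc_of_second_is_zero_cochain, Cochain.comp_assoc_of_second_is_zero_cochain,
      aux_comp_id hαp₁]
  have g₂ : ((Cochain.ofHom q₂).comp ((δ 0 1 β₂).comp α₂ (add_zero 1)) (zero_add 1)).comp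
      (Cochain.ofHom p₁) (add_zero 1)
      = -((δ 0 1 α₂).comp (Cochain.ofHom p₁) (add_zero 1)) := by
    rw [← Cochain.comp_assoc_of_first_is_zero_cochain, e₂, Cochain.neg_comp, Cochain.neg_comp,
      Cochain.comp_assoc_of_second_is_zero_cochain, Cochain.comp_assoc_of_second_is_zero_cochain,
      aux_comp_id hαp₂]
  have t₂ : ((Cochain.ofHom q₁).comp ((δ 0 1 β₂).comp α₂ (add_zero 1)) (zero_add 1)).comp
      (Cochain.ofHom p₂) (add_zero 1)
      = (Cochain.ofHom q₁).comp (δ 0 1 β₂) (zero_add 1) := by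
    rw [Cochain.comp_assoc_of_first_is_zero_cochain, f₂]
  have u₁ : ((Cochain.ofHom q₂).comp ((δ 0 1 β₁).comp α₁ (add_zero 1)) (zero_add 1)).comp
      (Cochain.ofHom p₁) (add_zero 1)
      = (Cochain.ofHom q₂).comp (δ 0 1 β₁) (zero_add 1) := by
    rw [Cochain.comp_assoc_of_first_is_zero_cochain, f₁]
  constructor
  · -- δ φ = 0
    rw [hφ]
    simp only [δ_sub, δ_add, δ_comp_ofHom, δ_ofHom_comp, hγ, Cochain.comp_sub,
      Cochain.sub_comp, t₂, g₁]
    abel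
  · refine ⟨α₂.comp (Cochain.ofHom p₁) (add_zero 0)
      + (Cochain.ofHom q₂).comp β₁ (zero_add 0)
      + ((Cochain.ofHom q₂).comp γ (zero_add 0)).comp (Cochain.ofHom p₁) (add_zero 0),
      ?_, ?_, ?_⟩
    · -- δ ψ = 0
      simp only [δ_add, δ_comp_ofHom, δ_ofHom_comp, hγ, Cochain.comp_sub,
        Cochain.sub_comp, u₁, g₂]
      abel
    · -- φ ∘ ψ = id
      rw [hφ]
      simp only [Cochain.add_comp, Cochain.sub_comp, Cochain.comp_add, Cochain.comp_sub,
        Cochain.comp_assoc_of_first_is_zero_cochain,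
        aux_comp_id hαp₁, aux_comp_id hαp₂, aux_comp_id hqβ₁, aux_comp_id hqβ₂,
        aux_comp_zero hPQ₁, aux_comp_zero hPQ₂, aux_comp_zero hαβ₁, aux_comp_zero hαβ₂,
        Cochain.comp_zero, Cochain.zero_comp, Cochain.comp_id, Cochain.id_comp]
      rw [← hsplit₁]
      abel
    · -- ψ ∘ φ = id
      rw [hφ]
      simp only [Cochain.add_comp, Cochain.sub_comp, Cochain.comp_add, Cochain.comp_sub,
        Cochain.comp_assoc_of_first_is_zero_cochain,
        aux_comp_id hαp₁, aux_comp_id hαp₂, aux_comp_id hqβ₁, aux_comp_id hqβ₂,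
        aux_comp_zero hPQ₁, aux_comp_zero hPQ₂, aux_comp_zero hαβ₁, aux_comp_zero hαβ₂,
        Cochain.comp_zero, Cochain.zero_comp, Cochain.comp_id, Cochain.id_comp]
      rw [← hsplit₂]
      abel
end
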